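/- arXiv:2307.06791 — 2 statements merged into one kernel-verified Lean document; each statement's English description precedes it below -/
import Mathlib

section
/- The centralizer of the image of the diagonal embedding φ_n(SL(2,ℂ)) inside Sp(2n,ℂ) equals the set of matrices M ⊗ I₂ with M ∈ O(n,ℂ). That is, X ∈ Sp(2n,ℂ) commutes with I_n ⊗ A for all A ∈ SL(2,ℂ) if and only if X = M ⊗ I₂ for some M with MᵀM = I_n. -/
open Matrix Kronecker

lemma mulk_right (n : ℕ) (X : Matrix (Fin n × Fin 2) (Fin n × Fin 2) ℂ)
    (A : Matrix (Fin 2) (Fin 2) ℂ) (i j : Fin n) (a b : Fin 2) :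
    (X * ((1 : Matrix (Fin n) (Fin n) ℂ) ⊗ₖ A)) (i, a) (j, b)
      = ∑ c : Fin 2, X (i, a) (j, c) * A c b := by
  simp [Matrix.mul_apply, Fintype.sum_prod_type, Matrix.one_apply, ite_mul,
    Finset.sum_ite_eq, Finset.mul_sum, mul_ite]

lemma mulk_left (n : ℕ) (X : Matrix (Fin n × Fin 2) (Fin n × Fin 2) ℂ)
    (A : Matrix (Fin 2) (Fin 2) ℂ) (i j : Fin n) (a b : Fin 2) :
    (((1 : Matrix (Fin n) (Fin n) ℂ) ⊗ₖ A) * X) (i, a) (j, b)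
      = ∑ c : Fin 2, A a c * X (i, c) (j, b) := by
  simp [Matrix.mul_apply, Fintype.sum_prod_type, Matrix.one_apply, ite_mul,
    Finset.sum_ite_eq, Finset.mul_sum, mul_ite]

theorem centralizer_of_diagonal_embedding_in_Sp (n : ℕ)
    (X : Matrix (Fin n × Fin 2) (Fin n × Fin 2) ℂ) :
    ((Xᵀ * ((1 : Matrix (Fin n) (Fin n) ℂ) ⊗ₖ !![0, 1; -1, 0]) * X
        = (1 : Matrix (Fin n) (Fin n) ℂ) ⊗ₖ !![0, 1; -1, 0]) ∧
      (∀ A : Matrix (Fin 2) (Fin 2) ℂ, A.det = 1 →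
        X * ((1 : Matrix (Fin n) (Fin n) ℂ) ⊗ₖ A)
          = ((1 : Matrix (Fin n) (Fin n) ℂ) ⊗ₖ A) * X))
    ↔ ∃ M : Matrix (Fin n) (Fin n) ℂ,
        Mᵀ * M = 1 ∧ X = M ⊗ₖ (1 : Matrix (Fin 2) (Fin 2) ℂ) := by
  constructor
  · rintro ⟨hs, hc⟩
    set M : Matrix (Fin n) (Fin n) ℂ := Matrix.of fun i j => X (i, 0) (j, 0) with hM
    have hU := hc !![1, 1; 0, 1] (by norm_num [Matrix.det_fin_two_of])
    have hK := hc !![0, 1; -1, 0] (by norm_num [Matrix.det_fin_two_of])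
    have key : X = M ⊗ₖ (1 : Matrix (Fin 2) (Fin 2) ℂ) := by
      ext ⟨i, a⟩ ⟨j, b⟩
      have eU : ∀ a b : Fin 2, ∑ c : Fin 2, X (i, a) (j, c) * !![(1:ℂ), 1; 0, 1] c b
          = ∑ c : Fin 2, !![(1:ℂ), 1; 0, 1] a c * X (i, c) (j, b) := fun a b => by
        rw [← mulk_right, ← mulk_left, hU]
      have eK : ∀ a b : Fin 2, ∑ c : Fin 2, X (i, a) (j, c) * !![(0:ℂ), 1; -1, 0] c b
          = ∑ c : Fin 2, !![(0:ℂ), 1; -1, 0] a c * X (i, c) (j, b) := fun a b => by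
        rw [← mulk_right, ← mulk_left, hK]
      have h10 : X (i, 1) (j, 0) = 0 := by
        have := eU 0 0
        simpa [Fin.sum_univ_two] using this
      have h01 : X (i, 0) (j, 1) = 0 := by
        have := eK 0 0
        simp [Fin.sum_univ_two] at this
        linear_combination -this - h10
      have h11 : X (i, 1) (j, 1) = X (i, 0) (j, 0) := by
        have := eK 0 1
        simp [Fin.sum_univ_two] at this
        linear_combination -this
      fin_cases a <;> fin_cases b <;>
        simp [hM, Matrix.kroneckerMap_apply, Matrix.one_apply, h10, h01, h11]
    refine ⟨M, ?_, key⟩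
    rw [key] at hs
    rw [← Matrix.kroneckerMap_transpose, ← Matrix.mul_kronecker_mul,
      ← Matrix.mul_kronecker_mul, Matrix.transpose_one, Matrix.mul_one,
      Matrix.one_mul, Matrix.mul_one] at hs
    ext i j
    have := congrFun (congrFun hs (i, 0)) (j, 1)
    simpa [Matrix.kroneckerMap_apply, Matrix.one_apply] using this
  · rintro ⟨M, hM, rfl⟩
    constructor
    · rw [← Matrix.kroneckerMap_transpose, ← Matrix.mul_kronecker_mul,
        ← Matrix.mul_kronecker_mul, Matrix.transpose_one, Matrix.mul_one,
        Matrix.one_mul, Matrix.mul_one, hM]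
    · intro A _
      rw [← Matrix.mul_kronecker_mul, ← Matrix.mul_kronecker_mul]
      simp
end

section
/- Let λ > 1, D = diag(λ, λ⁻¹), and K_n = I_n ⊗ K with K = [[0,1],[−1,0]]. A matrix M ∈ Sp(2n,ℂ) (i.e. Mᵀ K_n M = K_n) commutes with I_n ⊗ D if and only if there exists A ∈ GL(n,ℂ) such that, writing M as an n×n matrix of 2×2 blocks, the (i,j)-block of M equals diag(a_{ij}, b_{ij}) where (a_{ij}) = A and (b_{ij}) = A^{−T} (the inverse transpose of A). -/
open Matrix Kronecker

theorem centralizer_of_diagonal_hyperbolic_in_Sp (n : ℕ) (lam : ℝ) (hlam : 1 < lam)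
    (M : Matrix (Fin n × Fin 2) (Fin n × Fin 2) ℂ)
    (hM : Mᵀ * ((1 : Matrix (Fin n) (Fin n) ℂ) ⊗ₖ !![0, 1; -1, 0]) * M
        = (1 : Matrix (Fin n) (Fin n) ℂ) ⊗ₖ !![0, 1; -1, 0]) :
    (M * ((1 : Matrix (Fin n) (Fin n) ℂ) ⊗ₖ !![(lam : ℂ), 0; 0, (lam : ℂ)⁻¹])
        = ((1 : Matrix (Fin n) (Fin n) ℂ) ⊗ₖ !![(lam : ℂ), 0; 0, (lam : ℂ)⁻¹]) * M)
    ↔ ∃ A : Matrix (Fin n) (Fin n) ℂ, IsUnit A.det ∧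
        ∀ i j : Fin n,
          M (i, 0) (j, 0) = A i j ∧ M (i, 1) (j, 1) = (A⁻¹)ᵀ i j ∧
          M (i, 0) (j, 1) = 0 ∧ M (i, 1) (j, 0) = 0 := by
  have hlam0 : (lam : ℂ) ≠ 0 := by
    exact_mod_cast (by positivity : lam ≠ 0)
  have hne : (lam : ℂ) ≠ (lam : ℂ)⁻¹ := by
    intro h
    have h' : lam = lam⁻¹ := by
      exact_mod_cast (by rw [← Complex.ofReal_inv] at h; exact_mod_cast h : (lam : ℂ) = ((lam⁻¹ : ℝ) : ℂ))
    have : lam⁻¹ < 1 := inv_lt_one_of_one_lt₀ hlam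
    linarith [h' ▸ this]
  -- D as a diagonal matrix
  have hD : ((1 : Matrix (Fin n) (Fin n) ℂ) ⊗ₖ !![(lam : ℂ), 0; 0, (lam : ℂ)⁻¹])
      = diagonal (fun p : Fin n × Fin 2 => ![(lam : ℂ), (lam : ℂ)⁻¹] p.2) := by
    have h2 : (!![(lam : ℂ), 0; 0, (lam : ℂ)⁻¹]) = diagonal ![(lam : ℂ), (lam : ℂ)⁻¹] := by
      ext a b
      fin_cases a <;> fin_cases b <;> simp [diagonal]
    rw [h2, show (1 : Matrix (Fin n) (Fin n) ℂ) = diagonal (fun _ => (1 : ℂ)) from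
      Matrix.diagonal_one.symm, Matrix.diagonal_kronecker_diagonal]
    simp
  -- commuting iff off-diagonal blocks vanish
  have hcomm : (M * ((1 : Matrix (Fin n) (Fin n) ℂ) ⊗ₖ !![(lam : ℂ), 0; 0, (lam : ℂ)⁻¹])
        = ((1 : Matrix (Fin n) (Fin n) ℂ) ⊗ₖ !![(lam : ℂ), 0; 0, (lam : ℂ)⁻¹]) * M)
      ↔ ∀ i j : Fin n, M (i, 0) (j, 1) = 0 ∧ M (i, 1) (j, 0) = 0 := by
    rw [hD]
    constructor
    · intro h i j
      constructor
      · have h1 := congrFun (congrFun h (i, 0)) (j, 1)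
        rw [Matrix.mul_diagonal, Matrix.diagonal_mul] at h1
        simp only [Matrix.cons_val_one, Matrix.cons_val_zero, Matrix.head_cons] at h1
        by_contra hz
        exact hne ((mul_left_cancel₀ hz (by rw [h1]; ring)).symm)
      · have h1 := congrFun (congrFun h (i, 1)) (j, 0)
        rw [Matrix.mul_diagonal, Matrix.diagonal_mul] at h1
        simp only [Matrix.cons_val_one, Matrix.cons_val_zero, Matrix.head_cons] at h1
        by_contra hz
        exact hne (mul_left_cancel₀ hz (by rw [h1]; ring))
    · intro h
      ext ⟨i, a⟩ ⟨j, b⟩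
      rw [Matrix.mul_diagonal, Matrix.diagonal_mul]
      fin_cases a <;> fin_cases b <;>
        simp [(h i j).1, (h i j).2, mul_comm]
  rw [hcomm]
  constructor
  · rintro h
    set A : Matrix (Fin n) (Fin n) ℂ := Matrix.of fun i j => M (i, 0) (j, 0) with hA
    set B : Matrix (Fin n) (Fin n) ℂ := Matrix.of fun i j => M (i, 1) (j, 1) with hB
    have hAB : Aᵀ * B = 1 := by
      ext i j
      have hh := congrFun (congrFun hM (i, 0)) (j, 1)
      simp [Matrix.mul_apply, Fintype.sum_prod_type, Fin.sum_univ_two,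
        Matrix.kroneckerMap_apply, Matrix.one_apply] at hh
      simp only [Matrix.mul_apply, Matrix.transpose_apply, hA, hB, Matrix.of_apply,
        Matrix.one_apply]
      rw [← hh]
      refine Finset.sum_congr rfl fun k _ => ?_
      rw [(h k j).1]
      ring
    have hdet : IsUnit A.det := by
      refine IsUnit.of_mul_eq_one (a := A.det) B.det ?_
      rw [← Matrix.det_transpose A, ← Matrix.det_mul, hAB, Matrix.det_one]
    refine ⟨A, hdet, fun i j => ⟨rfl, ?_, (h i j).1, (h i j).2⟩⟩
    have hBinv : (A⁻¹)ᵀ = B := by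
      rw [Matrix.transpose_nonsing_inv, Matrix.inv_eq_right_inv hAB]
    rw [hBinv]
    rfl
  · rintro ⟨A, hdet, hent⟩ i j
    exact ⟨(hent i j).2.2.1, (hent i j).2.2.2⟩
end
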